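/- arXiv:1609.06153 — 3 statements merged into one kernel-verified Lean document; each statement's English description precedes it below -/
import Mathlib

section
/- Let Y, r be reals, 0 < b < 1, e > 0, f > 0, g > 0, and let δ_ang(T), δ_ang(G), δ_dae(T), δ_dae(G) be arbitrary reals. Consider the two-player game in which each player's action set is {T, G} and the utilities are: u_ang(T,T) = Y - (f/g)·b·(δ_ang(T)+δ_dae(T)), u_dae(T,T) = r - (e/g)·b·(δ_ang(T)+δ_dae(T)); u_ang(T,G) = Y + (f/g)·(δ_dae(G) - b·δ_ang(T)), u_dae(T,G) = r + (e/g)·(δ_dae(G) - b·δ_ang(T)); u_ang(G,T) = Y + (f/g)·(δ_ang(G) - b·δ_dae(T)), u_dae(G,T) = r + (e/g)·(δ_ang(G) - b·δ_dae(T)); u_ang(G,G) = Y + (f/g)·(δ_ang(G)+δ_dae(G)), u_dae(G,G) = r + (e/g)·(δ_ang(G)+δ_dae(G)). Then this game always has a dominant strategy equilibrium. -/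
/-! Each utility is `base + coef * (shift a + shift d)` with one `shift` depending only on
the angel's action and the other only on the daemon's. A player's gain from switching
actions is therefore independent of the opponent's action, so a maximiser of one's own
`shift` term is a dominant strategy. -/

/-- Actions in the fiscal-policy angel-daemon game: perturb taxes T or
government spending G. -/
inductive FiscalAct : Type
  | T : FiscalAct
  | G : FiscalAct

/-- Generic utility of the fiscal-policy angel-daemon game: `base` is the
unperturbed value (Y for the angel, r for the daemon) and `coef` the
multiplier (f/g for the angel, e/g for the daemon); the first action is the
angel's and the second the daemon's. -/
def fiscalU (base coef b δangT δangG δdaeT δdaeG : ℝ) :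
    FiscalAct → FiscalAct → ℝ
  | FiscalAct.T, FiscalAct.T => base - coef * (b * (δangT + δdaeT))
  | FiscalAct.T, FiscalAct.G => base + coef * (δdaeG - b * δangT)
  | FiscalAct.G, FiscalAct.T => base + coef * (δangG - b * δdaeT)
  | FiscalAct.G, FiscalAct.G => base + coef * (δangG + δdaeG)

/-- (a, d) is a dominant strategy equilibrium: each player's action is a best
response independently of the other player's action. -/
def IsDSE {α β : Type*} (uang udae : α → β → ℝ) (a : α) (d : β) : Prop :=
  ∀ (a' : α) (d' : β), uang a' d' ≤ uang a d' ∧ udae a' d' ≤ udae a' d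

theorem isDSE_of_separable {α β : Type*} {uang udae : α → β → ℝ}
    {pang pdae : α → ℝ} {qang qdae : β → ℝ} {a : α} {d : β}
    (hang : ∀ a d, uang a d = pang a + qang d) (hdae : ∀ a d, udae a d = pdae a + qdae d)
    (ha : ∀ a', pang a' ≤ pang a) (hd : ∀ d', qdae d' ≤ qdae d) :
    IsDSE uang udae a d := fun a' d' => by
  rw [hang, hang, hdae, hdae]
  exact ⟨add_le_add_left (ha a') _, add_le_add_right (hd d') _⟩

namespace FiscalAct

theorem exists_forall_le {γ : Type*} [LinearOrder γ] (p : FiscalAct → γ) :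
    ∃ a, ∀ a', p a' ≤ p a := by
  rcases le_total (p T) (p G) with h | h
  · exact ⟨G, by rintro (_ | _) <;> simp [h]⟩
  · exact ⟨T, by rintro (_ | _) <;> simp [h]⟩

def shift (b δT δG : ℝ) : FiscalAct → ℝ
  | T => -(b * δT)
  | G => δG

end FiscalAct

theorem fiscalU_eq_add (base coef b δangT δangG δdaeT δdaeG : ℝ) (a d : FiscalAct) :
    fiscalU base coef b δangT δangG δdaeT δdaeG a d =
      (base + coef * FiscalAct.shift b δangT δangG a) +
        coef * FiscalAct.shift b δdaeT δdaeG d := by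
  cases a <;> cases d <;> simp only [fiscalU, FiscalAct.shift] <;> ring

theorem fiscal_game_has_DSE_general
    (Y r b e f g δangT δangG δdaeT δdaeG : ℝ) :
    ∃ (a : FiscalAct) (d : FiscalAct),
      IsDSE (fiscalU Y (f / g) b δangT δangG δdaeT δdaeG)
            (fiscalU r (e / g) b δangT δangG δdaeT δdaeG) a d := by
  obtain ⟨a, ha⟩ :=
    FiscalAct.exists_forall_le fun a => Y + f / g * FiscalAct.shift b δangT δangG a
  obtain ⟨d, hd⟩ :=
    FiscalAct.exists_forall_le fun d => e / g * FiscalAct.shift b δdaeT δdaeG d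
  exact ⟨a, d, isDSE_of_separable
    (fiscalU_eq_add _ _ _ _ _ _ _) (fiscalU_eq_add _ _ _ _ _ _ _) ha hd⟩

/-- The fiscal-policy angel-daemon game always has a dominant
strategy equilibrium. -/
theorem fiscal_game_has_DSE
    (Y r b e f g δangT δangG δdaeT δdaeG : ℝ)
    (hb0 : 0 < b) (hb1 : b < 1) (he : 0 < e) (hf : 0 < f) (hg : 0 < g) :
    ∃ (a : FiscalAct) (d : FiscalAct),
      IsDSE (fiscalU Y (f / g) b δangT δangG δdaeT δdaeG)
            (fiscalU r (e / g) b δangT δangG δdaeT δdaeG) a d :=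
  fiscal_game_has_DSE_general Y r b e f g δangT δangG δdaeT δdaeG
end

section
/- In the fiscal-policy angel-daemon game (action sets {T, G} for each player, utilities u_ang, u_dae given by the bimatrix with u_ang(T,T) = Y - (f/g)b(δ_ang(T)+δ_dae(T)), u_ang(T,G) = Y + (f/g)(δ_dae(G) - bδ_ang(T)), u_ang(G,T) = Y + (f/g)(δ_ang(G) - bδ_dae(T)), u_ang(G,G) = Y + (f/g)(δ_ang(G)+δ_dae(G)), and u_dae the same expressions with f replaced by e and Y replaced by r), assume 0 < b < 1, e > 0, f > 0, g > 0, and define μ_ang = b·δ_ang(T) + δ_ang(G) and μ_dae = b·δ_dae(T) + δ_dae(G). Then for every daemon action d ∈ {T, G}, u_ang(G, d) - u_ang(T, d) = (f/g)·μ_ang, and for every angel action a ∈ {T, G}, u_dae(a, G) - u_dae(a, T) = (e/g)·μ_dae. In particular, for each daemon action d the angel's best-response set is {G} if μ_ang > 0, {T, G} if μ_ang = 0 and {T} if μ_ang < 0, and for each angel action a the daemon's best-response set is {G} if μ_dae > 0, {T, G} if μ_dae = 0 and {T} if μ_dae < 0. -/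
namespace FiscalAct

theorem forall_iff {p : FiscalAct → Prop} : (∀ a, p a) ↔ p T ∧ p G :=
  ⟨fun h => ⟨h T, h G⟩, fun ⟨hT, hG⟩ a => by cases a <;> assumption⟩

def bestResponses (u : FiscalAct → ℝ) : Set FiscalAct := {a | ∀ a', u a' ≤ u a}

variable {u : FiscalAct → ℝ}

theorem bestResponses_eq_G_of_lt (h : u T < u G) : bestResponses u = {G} := by
  ext a; cases a <;> simp [bestResponses, forall_iff, h.le, h.not_ge]

theorem bestResponses_eq_T_G_of_eq (h : u T = u G) : bestResponses u = {T, G} := by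
  ext a; cases a <;> simp [bestResponses, forall_iff, h]

theorem bestResponses_eq_T_of_lt (h : u G < u T) : bestResponses u = {T} := by
  ext a; cases a <;> simp [bestResponses, forall_iff, h.le, h.not_ge]

theorem bestResponses_of_sub_eq_mul {c μ : ℝ} (hc : 0 < c) (h : u G - u T = c * μ) :
    (0 < μ → bestResponses u = {G}) ∧
    (μ = 0 → bestResponses u = {T, G}) ∧
    (μ < 0 → bestResponses u = {T}) := by
  refine ⟨fun hμ => ?_, fun hμ => ?_, fun hμ => ?_⟩
  · exact bestResponses_eq_G_of_lt (by nlinarith [mul_pos hc hμ])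
  · exact bestResponses_eq_T_G_of_eq (by rw [hμ, mul_zero, sub_eq_zero] at h; exact h.symm)
  · exact bestResponses_eq_T_of_lt (by nlinarith [mul_neg_of_pos_of_neg hc hμ])

end FiscalAct

open FiscalAct

variable (base coef b δangT δangG δdaeT δdaeG : ℝ)

theorem fiscalU_angel_G_sub_T (d : FiscalAct) :
    fiscalU base coef b δangT δangG δdaeT δdaeG G d -
      fiscalU base coef b δangT δangG δdaeT δdaeG T d = coef * (b * δangT + δangG) := by
  cases d <;> simp only [fiscalU] <;> ring

theorem fiscalU_daemon_G_sub_T (a : FiscalAct) :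
    fiscalU base coef b δangT δangG δdaeT δdaeG a G -
      fiscalU base coef b δangT δangG δdaeT δdaeG a T = coef * (b * δdaeT + δdaeG) := by
  cases a <;> simp only [fiscalU] <;> ring

theorem fiscal_game_best_responses_general
    (Y r b e f g δangT δangG δdaeT δdaeG : ℝ)
    (he : 0 < e) (hf : 0 < f) (hg : 0 < g) :
    let uang := fiscalU Y (f / g) b δangT δangG δdaeT δdaeG
    let udae := fiscalU r (e / g) b δangT δangG δdaeT δdaeG
    let μang := b * δangT + δangG
    let μdae := b * δdaeT + δdaeG
    (∀ d, uang FiscalAct.G d - uang FiscalAct.T d = (f / g) * μang) ∧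
    (∀ a, udae a FiscalAct.G - udae a FiscalAct.T = (e / g) * μdae) ∧
    (∀ d,
      (0 < μang → {a : FiscalAct | ∀ a', uang a' d ≤ uang a d} = {FiscalAct.G}) ∧
      (μang = 0 → {a : FiscalAct | ∀ a', uang a' d ≤ uang a d} = {FiscalAct.T, FiscalAct.G}) ∧
      (μang < 0 → {a : FiscalAct | ∀ a', uang a' d ≤ uang a d} = {FiscalAct.T})) ∧
    (∀ a,
      (0 < μdae → {d : FiscalAct | ∀ d', udae a d' ≤ udae a d} = {FiscalAct.G}) ∧
      (μdae = 0 → {d : FiscalAct | ∀ d', udae a d' ≤ udae a d} = {FiscalAct.T, FiscalAct.G}) ∧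
      (μdae < 0 → {d : FiscalAct | ∀ d', udae a d' ≤ udae a d} = {FiscalAct.T})) := by
  intro uang udae μang μdae
  have hang := fiscalU_angel_G_sub_T Y (f / g) b δangT δangG δdaeT δdaeG
  have hdae := fiscalU_daemon_G_sub_T r (e / g) b δangT δangG δdaeT δdaeG
  exact ⟨hang, hdae,
    fun d => bestResponses_of_sub_eq_mul (div_pos hf hg) (hang d),
    fun a => bestResponses_of_sub_eq_mul (div_pos he hg) (hdae a)⟩

/-- In the fiscal-policy angel-daemon game, with
μ_ang = b·δ_ang(T) + δ_ang(G) and μ_dae = b·δ_dae(T) + δ_dae(G), the utility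
increments are u_ang(G,d) - u_ang(T,d) = (f/g)·μ_ang and
u_dae(a,G) - u_dae(a,T) = (e/g)·μ_dae, and the best-response sets are
determined by the signs of μ_ang and μ_dae. -/
theorem fiscal_game_best_responses
    (Y r b e f g δangT δangG δdaeT δdaeG : ℝ)
    (hb0 : 0 < b) (hb1 : b < 1) (he : 0 < e) (hf : 0 < f) (hg : 0 < g) :
    let uang := fiscalU Y (f / g) b δangT δangG δdaeT δdaeG
    let udae := fiscalU r (e / g) b δangT δangG δdaeT δdaeG
    let μang := b * δangT + δangG
    let μdae := b * δdaeT + δdaeG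
    (∀ d, uang FiscalAct.G d - uang FiscalAct.T d = (f / g) * μang) ∧
    (∀ a, udae a FiscalAct.G - udae a FiscalAct.T = (e / g) * μdae) ∧
    (∀ d,
      (0 < μang → {a : FiscalAct | ∀ a', uang a' d ≤ uang a d} = {FiscalAct.G}) ∧
      (μang = 0 → {a : FiscalAct | ∀ a', uang a' d ≤ uang a d} = {FiscalAct.T, FiscalAct.G}) ∧
      (μang < 0 → {a : FiscalAct | ∀ a', uang a' d ≤ uang a d} = {FiscalAct.T})) ∧
    (∀ a,
      (0 < μdae → {d : FiscalAct | ∀ d', udae a d' ≤ udae a d} = {FiscalAct.G}) ∧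
      (μdae = 0 → {d : FiscalAct | ∀ d', udae a d' ≤ udae a d} = {FiscalAct.T, FiscalAct.G}) ∧
      (μdae < 0 → {d : FiscalAct | ∀ d', udae a d' ≤ udae a d} = {FiscalAct.T})) :=
  fiscal_game_best_responses_general Y r b e f g δangT δangG δdaeT δdaeG he hf hg
end

section
/- In the fiscal-policy angel-daemon game (action sets {T, G} for each player; utilities u_ang(T,T) = Y - (f/g)b(δ_ang(T)+δ_dae(T)), u_ang(T,G) = Y + (f/g)(δ_dae(G) - bδ_ang(T)), u_ang(G,T) = Y + (f/g)(δ_ang(G) - bδ_dae(T)), u_ang(G,G) = Y + (f/g)(δ_ang(G)+δ_dae(G)), and u_dae given by the same expressions with f replaced by e and Y by r), assume 0 < b < 1, e > 0, f > 0, g > 0, and set μ_ang = b·δ_ang(T) + δ_ang(G), μ_dae = b·δ_dae(T) + δ_dae(G). If μ_ang ≠ 0 and μ_dae ≠ 0, then the profile (a*, d*), where a* = G if μ_ang > 0 and a* = T if μ_ang < 0, and d* = G if μ_dae > 0 and d* = T if μ_dae < 0, is a dominant strategy equilibrium and the unique pure Nash equilibrium of the game. -/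
/-- (a, d) is a pure Nash equilibrium. -/
def IsPNE {α β : Type*} (uang udae : α → β → ℝ) (a : α) (d : β) : Prop :=
  (∀ a' : α, uang a' d ≤ uang a d) ∧ (∀ d' : β, udae a d' ≤ udae a d)

/-!
Switching from `T` to `G` changes the angel's utility by `(f/g)·μ_ang` and the daemon's by
`(e/g)·μ_dae`, whatever the opponent plays. Hence the sign of `μ_ang` (resp. `μ_dae`) singles out
a strictly dominant action for each player, and a profile of strictly dominant actions is a
dominant strategy equilibrium and the only pure Nash equilibrium.
-/

/-- Stated for the player choosing the first argument; for the daemon use `flip udae`. -/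
def IsStrictlyDominant {α β : Type*} (u : α → β → ℝ) (a : α) : Prop :=
  ∀ a' ≠ a, ∀ b, u a' b < u a b

section StrictDominance

variable {α β : Type*} {uang udae : α → β → ℝ} {a : α} {d : β}

theorem IsStrictlyDominant.le {u : α → β → ℝ} (h : IsStrictlyDominant u a) (a' : α) (b : β) :
    u a' b ≤ u a b := by
  by_cases ha' : a' = a
  · rw [ha']
  · exact (h a' ha' b).le

theorem isDSE_of_isStrictlyDominant (hang : IsStrictlyDominant uang a)
    (hdae : IsStrictlyDominant (flip udae) d) : IsDSE uang udae a d :=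
  fun a' d' => ⟨hang.le a' d', hdae.le d' a'⟩

theorem isPNE_iff_of_isStrictlyDominant (hang : IsStrictlyDominant uang a)
    (hdae : IsStrictlyDominant (flip udae) d) (a' : α) (d' : β) :
    IsPNE uang udae a' d' ↔ a' = a ∧ d' = d := by
  constructor
  · rintro ⟨hbest_ang, hbest_dae⟩
    constructor
    · by_contra ha'
      exact (hang a' ha' d').not_ge (hbest_ang a)
    · by_contra hd'
      exact (hdae d' hd' a').not_ge (hbest_dae d)
  · rintro ⟨rfl, rfl⟩
    exact ⟨fun a'' => hang.le a'' d', fun d'' => hdae.le d'' a'⟩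

end StrictDominance

theorem isStrictlyDominant_ite {β : Type*} {u : FiscalAct → β → ℝ} {k μ : ℝ} (hk : 0 < k)
    (hμ : μ ≠ 0) (hgain : ∀ b, u FiscalAct.G b - u FiscalAct.T b = k * μ) :
    IsStrictlyDominant u (if 0 < μ then FiscalAct.G else FiscalAct.T) := by
  intro a' ha' b
  have hgain := hgain b
  rcases hμ.lt_or_gt with hneg | hpos
  · rw [if_neg hneg.not_gt] at ha' ⊢
    cases a'
    · exact absurd rfl ha'
    · linarith [mul_neg_of_pos_of_neg hk hneg]
  · rw [if_pos hpos] at ha' ⊢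
    cases a'
    · linarith [mul_pos hk hpos]
    · exact absurd rfl ha'

section FiscalGains

variable {base coef b δangT δangG δdaeT δdaeG : ℝ}

theorem fiscalU_G_left_sub_T_left (d : FiscalAct) :
    fiscalU base coef b δangT δangG δdaeT δdaeG FiscalAct.G d
      - fiscalU base coef b δangT δangG δdaeT δdaeG FiscalAct.T d
      = coef * (b * δangT + δangG) := by
  cases d <;> simp only [fiscalU] <;> ring

theorem fiscalU_G_right_sub_T_right (a : FiscalAct) :
    fiscalU base coef b δangT δangG δdaeT δdaeG a FiscalAct.G
      - fiscalU base coef b δangT δangG δdaeT δdaeG a FiscalAct.T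
      = coef * (b * δdaeT + δdaeG) := by
  cases a <;> simp only [fiscalU] <;> ring

end FiscalGains

theorem fiscal_game_unique_PNE_general
    (Y r b e f g δangT δangG δdaeT δdaeG : ℝ)
    (he : 0 < e) (hf : 0 < f) (hg : 0 < g)
    (hμang : b * δangT + δangG ≠ 0) (hμdae : b * δdaeT + δdaeG ≠ 0) :
    let uang := fiscalU Y (f / g) b δangT δangG δdaeT δdaeG
    let udae := fiscalU r (e / g) b δangT δangG δdaeT δdaeG
    let astar : FiscalAct := if 0 < b * δangT + δangG then FiscalAct.G else FiscalAct.T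
    let dstar : FiscalAct := if 0 < b * δdaeT + δdaeG then FiscalAct.G else FiscalAct.T
    IsDSE uang udae astar dstar ∧
    (∀ a d, IsPNE uang udae a d ↔ (a = astar ∧ d = dstar)) := by
  intro uang udae astar dstar
  have hang : IsStrictlyDominant uang astar :=
    isStrictlyDominant_ite (div_pos hf hg) hμang fiscalU_G_left_sub_T_left
  have hdae : IsStrictlyDominant (flip udae) dstar :=
    isStrictlyDominant_ite (div_pos he hg) hμdae fiscalU_G_right_sub_T_right
  exact ⟨isDSE_of_isStrictlyDominant hang hdae, isPNE_iff_of_isStrictlyDominant hang hdae⟩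

/-- In the fiscal-policy angel-daemon game, if
μ_ang = b·δ_ang(T) + δ_ang(G) ≠ 0 and μ_dae = b·δ_dae(T) + δ_dae(G) ≠ 0, then
the profile (a*, d*) with a* = G if μ_ang > 0 else T, and d* = G if μ_dae > 0
else T, is a dominant strategy equilibrium and the unique pure Nash
equilibrium. -/
theorem fiscal_game_unique_PNE
    (Y r b e f g δangT δangG δdaeT δdaeG : ℝ)
    (hb0 : 0 < b) (hb1 : b < 1) (he : 0 < e) (hf : 0 < f) (hg : 0 < g)
    (hμang : b * δangT + δangG ≠ 0) (hμdae : b * δdaeT + δdaeG ≠ 0) :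
    let uang := fiscalU Y (f / g) b δangT δangG δdaeT δdaeG
    let udae := fiscalU r (e / g) b δangT δangG δdaeT δdaeG
    let astar : FiscalAct := if 0 < b * δangT + δangG then FiscalAct.G else FiscalAct.T
    let dstar : FiscalAct := if 0 < b * δdaeT + δdaeG then FiscalAct.G else FiscalAct.T
    IsDSE uang udae astar dstar ∧
    (∀ a d, IsPNE uang udae a d ↔ (a = astar ∧ d = dstar)) :=
  fiscal_game_unique_PNE_general Y r b e f g δangT δangG δdaeT δdaeG he hf hg hμang hμdae
end
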